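/- Let G be an I-involutive basis (with respect to an involutive division I and monomial order ≼). A polynomial is reducible modulo G for the ordinary polynomial division if and only if it is I-reducible modulo G. -/

import Mathlib

open MvPolynomial

variable {K : Type*} [Field K] {n : ℕ}

/-- The six Gerdt–Blinkov axioms for an involutive division on the monomials
`Fin n →₀ ℕ`, given as a relation `d U u w` (read: `u` is an involutive divisor of `w`
with respect to `U`). -/
def IsInvolutiveDivision (n : ℕ)
    (d : Finset (Fin n →₀ ℕ) → (Fin n →₀ ℕ) → (Fin n →₀ ℕ) → Prop) : Prop :=
  (∀ U u w, d U u w → u ∈ U ∧ u ≤ w) ∧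
  (∀ (U : Finset (Fin n →₀ ℕ)) u, u ∈ U → d U u u) ∧
  (∀ (U : Finset (Fin n →₀ ℕ)) u, u ∈ U →
      ∀ v w : Fin n →₀ ℕ, (d U u (u + v) ∧ d U u (u + w)) ↔ d U u (u + v + w)) ∧
  (∀ (U : Finset (Fin n →₀ ℕ)) u u' w, d U u w → d U u' w → d U u u' ∨ d U u' u) ∧
  (∀ (U : Finset (Fin n →₀ ℕ)) u u' w, d U u u' → d U u' w → d U u w) ∧
  (∀ (U U' : Finset (Fin n →₀ ℕ)) u w, U' ⊆ U → u ∈ U' → d U u w → d U' u w)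

/-- The leading monomial of a polynomial with respect to a monomial order. -/
noncomputable def lmon (m : MonomialOrder (Fin n)) (f : MvPolynomial (Fin n) K) :
    Fin n →₀ ℕ :=
  m.toSyn.symm (f.support.sup (fun a => m.toSyn a))

/-- The set of leading monomials of a finite set of polynomials. -/
noncomputable def lmset (m : MonomialOrder (Fin n)) (G : Finset (MvPolynomial (Fin n) K)) :
    Finset (Fin n →₀ ℕ) :=
  G.image (lmon m)

/-- `f` is involutively reducible modulo `G`: some monomial of `f` admits the leading
monomial of some `g ∈ G` as an involutive divisor with respect to `lm(G)`. -/
def IsInvReducible (d : Finset (Fin n →₀ ℕ) → (Fin n →₀ ℕ) → (Fin n →₀ ℕ) → Prop)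
    (m : MonomialOrder (Fin n)) (G : Finset (MvPolynomial (Fin n) K))
    (f : MvPolynomial (Fin n) K) : Prop :=
  ∃ g ∈ G, ∃ u ∈ f.support, d (lmset m G) (lmon m g) u

/-- One step of involutive reduction modulo `G`: a term `λ·u` of `f` with
`u = lm(g)·v`, `v` involutively multiplicative for `lm(g)`, is replaced using `g`,
giving `f - (λ u / lt(g))·g`. -/
def InvRedStep (d : Finset (Fin n →₀ ℕ) → (Fin n →₀ ℕ) → (Fin n →₀ ℕ) → Prop)
    (m : MonomialOrder (Fin n)) (G : Finset (MvPolynomial (Fin n) K))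
    (f f' : MvPolynomial (Fin n) K) : Prop :=
  ∃ g ∈ G, ∃ u ∈ f.support, d (lmset m G) (lmon m g) u ∧
    f' = f - (monomial (u - lmon m g) (f.coeff u / g.coeff (lmon m g))) * g

/-- `G` is involutively autoreduced with respect to `d` and the monomial order `m`:
the set of leading monomials of `G` is autoreduced, and no non-leading term of an
element of `G` lies in the involutive cone of `lm(G)`. -/
def IsAutoreduced (d : Finset (Fin n →₀ ℕ) → (Fin n →₀ ℕ) → (Fin n →₀ ℕ) → Prop)
    (m : MonomialOrder (Fin n)) (G : Finset (MvPolynomial (Fin n) K)) : Prop :=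
  (∀ a ∈ lmset m G, ∀ b ∈ lmset m G, a ≠ b → ¬ d (lmset m G) a b) ∧
  (∀ g ∈ G, ∀ u ∈ g.support, u ≠ lmon m g → ¬ ∃ a ∈ lmset m G, d (lmset m G) a u)

/-- `G` is an involutive basis with respect to `d` and `m`: it is involutively
autoreduced and every monomial multiple `u·g` of every `g ∈ G` has involutive normal
form `0` modulo `G`. -/
def IsInvBasis (d : Finset (Fin n →₀ ℕ) → (Fin n →₀ ℕ) → (Fin n →₀ ℕ) → Prop)
    (m : MonomialOrder (Fin n)) (G : Finset (MvPolynomial (Fin n) K)) : Prop :=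
  IsAutoreduced d m G ∧
  ∀ g ∈ G, ∀ u : Fin n →₀ ℕ,
    Relation.ReflTransGen (InvRedStep d m G) ((monomial u (1 : K)) * g) 0

theorem lmon_eq_degree (m : MonomialOrder (Fin n)) (f : MvPolynomial (Fin n) K) :
    lmon m f = m.degree f :=
  rfl

/-- A reduction step at a monomial strictly below `lm(p)` leaves `lm(p)` in place, so along a
reduction of `p ≠ 0` to `0` some step must reduce `lm(p)` itself. -/
theorem exists_inv_divisor_degree_of_reduces_to_zero
    {d : Finset (Fin n →₀ ℕ) → (Fin n →₀ ℕ) → (Fin n →₀ ℕ) → Prop}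
    (hle : ∀ U a w, d U a w → a ≤ w) {m : MonomialOrder (Fin n)}
    {G : Finset (MvPolynomial (Fin n) K)} {p : MvPolynomial (Fin n) K} (hp : p ≠ 0)
    (hred : Relation.ReflTransGen (InvRedStep d m G) p 0) :
    ∃ g ∈ G, d (lmset m G) (lmon m g) (m.degree p) := by
  induction hred using Relation.ReflTransGen.head_induction_on with
  | refl => exact absurd rfl hp
  | @head p p' step _ ih =>
    obtain ⟨g, hg, w, hw, hdiv, rfl⟩ := step
    rcases (m.le_degree hw).eq_or_lt with hw_eq | hw_lt
    · exact ⟨g, hg, m.toSyn.injective hw_eq ▸ hdiv⟩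
    set q := monomial (w - lmon m g) (p.coeff w / g.coeff (lmon m g)) * g
    have hq : m.toSyn (m.degree q) < m.toSyn (m.degree p) := by
      calc m.toSyn (m.degree q)
          ≤ m.toSyn (m.degree (monomial (w - lmon m g) _) + m.degree g) := m.degree_mul_le
        _ ≤ m.toSyn (w - lmon m g + m.degree g) := by
          simp only [map_add]
          gcongr
          exact m.degree_monomial_le _
        _ = m.toSyn w := by rw [← lmon_eq_degree, tsub_add_cancel_of_le (hle _ _ _ hdiv)]
        _ < m.toSyn (m.degree p) := hw_lt
    have hpq : p - q ≠ 0 := by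
      rw [← m.leadingCoeff_ne_zero_iff, m.leadingCoeff_sub_of_lt hq]
      exact m.leadingCoeff_ne_zero_iff.mpr hp
    simpa only [m.degree_sub_of_lt hq] using ih hpq

/-- If `G` is an involutive basis, a polynomial is reducible modulo `G` for the ordinary
polynomial division if and only if it is involutively reducible modulo `G`. -/
theorem reducible_iff_inv_reducible
    (d : Finset (Fin n →₀ ℕ) → (Fin n →₀ ℕ) → (Fin n →₀ ℕ) → Prop)
    (hd : IsInvolutiveDivision n d) (m : MonomialOrder (Fin n))
    (G : Finset (MvPolynomial (Fin n) K)) (hG0 : (0 : MvPolynomial (Fin n) K) ∉ G)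
    (hG : IsInvBasis d m G) (f : MvPolynomial (Fin n) K) :
    (∃ g ∈ G, ∃ u ∈ f.support, lmon m g ≤ u) ↔ IsInvReducible d m G f := by
  constructor
  · rintro ⟨g, hg, u, hu, hgu⟩
    have hg0 : g ≠ 0 := fun h => hG0 (h ▸ hg)
    have hmul0 : monomial (u - lmon m g) (1 : K) * g ≠ 0 := mul_ne_zero (by simp) hg0
    have hdeg : m.degree (monomial (u - lmon m g) (1 : K) * g) = u := by
      classical
      rw [m.degree_mul (by simp) hg0, m.degree_monomial, if_neg one_ne_zero, ← lmon_eq_degree,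
        tsub_add_cancel_of_le hgu]
    obtain ⟨g', hg', hdiv⟩ := exists_inv_divisor_degree_of_reduces_to_zero
      (fun U a w h => (hd.1 U a w h).2) hmul0 (hG.2 g hg (u - lmon m g))
    exact ⟨g', hg', u, hu, hdeg ▸ hdiv⟩
  · rintro ⟨g, hg, u, hu, hdiv⟩
    exact ⟨g, hg, u, hu, (hd.1 _ _ _ hdiv).2⟩
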